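/- arXiv:1601.01504 — 4 statements merged into one kernel-verified Lean document; each statement's English description precedes it below -/
import Mathlib

section
/- In the minimal trellis of an almost affine code C of dimension k and length n over alphabet F of size q, the number of vertices at stage i satisfies log_q |V_i| ≥ k − k_i(C) − k_{n−i}(C) for every 1 ≤ i ≤ n. -/
/-- The projection (puncturing) of a block code `C ⊆ F^n` to the coordinate set `X`. -/
def projC {F : Type*} [DecidableEq F] {n : ℕ} (C : Finset (Fin n → F)) (X : Finset (Fin n)) :
    Finset ({ i // i ∈ X } → F) :=
  C.image (fun c i => c i.1)

/-- `C ⊆ F^n` is an almost affine code of length `n` and dimension `k`: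
`|C| = |F|^k` and every projection has cardinality a power of `|F|`. -/
def IsAlmostAffineCode {F : Type*} [Fintype F] [DecidableEq F] (n k : ℕ)
    (C : Finset (Fin n → F)) : Prop :=
  C.card = Fintype.card F ^ k ∧
    ∀ X : Finset (Fin n), ∃ s : ℕ, (projC C X).card = Fintype.card F ^ s

/-- The `ct`-support of a word `c`. -/
def suppW {F : Type*} [DecidableEq F] {n : ℕ} (c ct : Fin n → F) : Finset (Fin n) :=
  Finset.univ.filter (fun i => c i ≠ ct i)

/-- `C(X, ct)`: the codewords of `C` agreeing with `ct` on `X`. -/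
def agreeOn {F : Type*} [DecidableEq F] {n : ℕ} (C : Finset (Fin n → F))
    (X : Finset (Fin n)) (ct : Fin n → F) : Finset (Fin n → F) :=
  C.filter (fun w => ∀ i ∈ X, w i = ct i)

/-- The `ct`-support of a code `D`. -/
def suppCode {F : Type*} [DecidableEq F] {n : ℕ} (D : Finset (Fin n → F)) (ct : Fin n → F) :
    Finset (Fin n) :=
  D.biUnion (fun w => suppW w ct)

/-- The vertex set at stage `i` of the minimal trellis of `C`: two length-`i` prefixes
of codewords are identified iff they have the same set of possible endings in `C`.
We represent each vertex by its (common) set of endings, so the number of vertices is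
the cardinality of this image. -/
noncomputable def trellisVertices {F : Type*} [Fintype F] [DecidableEq F] {n : ℕ}
    (C : Finset (Fin n → F)) (i : ℕ) :
    Finset (Finset ({ j : Fin n // i ≤ (j : ℕ) } → F)) :=
  C.image (fun c =>
    (C.filter (fun w => ∀ j : Fin n, (j : ℕ) < i → w j = c j)).image
      (fun w => fun j : { j : Fin n // i ≤ (j : ℕ) } => w j.1))

section TrellisAux
variable {F : Type*} [Fintype F] [DecidableEq F] {n k : ℕ}

lemma projC_rank_le (hF : 1 < Fintype.card F) (C : Finset (Fin n → F))
    (hCk : C.card = Fintype.card F ^ k) (r : Finset (Fin n) → ℕ)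
    (hr : ∀ X, (projC C X).card = Fintype.card F ^ r X) (X : Finset (Fin n)) :
    r X ≤ k := by
  have h1 : (projC C X).card ≤ C.card := Finset.card_image_le
  rw [hr, hCk] at h1
  exact (Nat.pow_le_pow_iff_right hF).mp h1

lemma agree_card_univ (hF : 1 < Fintype.card F) (C : Finset (Fin n → F))
    (hCk : C.card = Fintype.card F ^ k) (r : Finset (Fin n) → ℕ)
    (hr : ∀ X, (projC C X).card = Fintype.card F ^ r X) (c : Fin n → F) (hc : c ∈ C) :
    (C.filter (fun w => ∀ l ∈ (Finset.univ : Finset (Fin n)), w l = c l)).card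
      = Fintype.card F ^ (k - r Finset.univ) := by
  have hinj : Set.InjOn (fun (a : Fin n → F) (i : {i // i ∈ (Finset.univ : Finset (Fin n))}) => a i.1) C :=
    fun a _ b _ h => funext fun j => congrFun h ⟨j, Finset.mem_univ j⟩
  have hcard : (projC C Finset.univ).card = C.card := Finset.card_image_of_injOn hinj
  rw [hr, hCk] at hcard
  have hru : r Finset.univ = k := Nat.pow_right_injective hF hcard
  have hone : C.filter (fun w => ∀ l ∈ (Finset.univ : Finset (Fin n)), w l = c l) = {c} := by
    ext w
    simp only [Finset.mem_filter, Finset.mem_singleton, Finset.mem_univ, forall_true_left]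
    constructor
    · rintro ⟨_, h⟩; exact funext h
    · rintro rfl; exact ⟨hc, fun _ => rfl⟩
  rw [hone, hru, Nat.sub_self, pow_zero, Finset.card_singleton]

lemma agree_card (hF : 1 < Fintype.card F) (C : Finset (Fin n → F))
    (hCk : C.card = Fintype.card F ^ k) (r : Finset (Fin n) → ℕ)
    (hr : ∀ X, (projC C X).card = Fintype.card F ^ r X) :
    ∀ m : ℕ, ∀ X : Finset (Fin n), n - X.card ≤ m → ∀ c ∈ C,
      (C.filter (fun w => ∀ l ∈ X, w l = c l)).card = Fintype.card F ^ (k - r X) := by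
  intro m
  induction m with
  | zero =>
    intro X hX c hc
    have hXu : X = Finset.univ := by
      apply Finset.eq_univ_of_card
      have := Finset.card_le_card (Finset.subset_univ X)
      simp only [Finset.card_univ, Fintype.card_fin] at this ⊢
      omega
    subst hXu
    exact agree_card_univ hF C hCk r hr c hc
  | succ m ih =>
    intro X hX c hc
    by_cases hXu : X = Finset.univ
    · subst hXu; exact agree_card_univ hF C hCk r hr c hc
    · obtain ⟨j, hj⟩ : ∃ j, j ∉ X := by
        by_contra h; push_neg at h; exact hXu (Finset.eq_univ_iff_forall.mpr h)
      set Y := insert j X with hYdef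
      have hYcard : Y.card = X.card + 1 := Finset.card_insert_of_notMem hj
      have hXn : X.card ≤ n := by
        have := Finset.card_le_card (Finset.subset_univ X)
        simpa using this
      have hYm : n - Y.card ≤ m := by omega
      set ρ : ({l // l ∈ Y} → F) → ({l // l ∈ X} → F) :=
        fun e l => e ⟨l.1, Finset.mem_insert_of_mem l.2⟩ with hρdef
      have hmaps : ∀ e ∈ projC C Y, ρ e ∈ projC C X := by
        intro e he
        obtain ⟨w, hw, rfl⟩ := Finset.mem_image.mp he
        exact Finset.mem_image.mpr ⟨w, hw, rfl⟩
      have hsum : (projC C Y).card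
          = ∑ p ∈ projC C X, ((projC C Y).filter (fun e => ρ e = p)).card :=
        Finset.card_eq_sum_card_fiberwise hmaps
      have hfib1 : ∀ p ∈ projC C X, 1 ≤ ((projC C Y).filter (fun e => ρ e = p)).card := by
        intro p hp
        obtain ⟨w, hw, rfl⟩ := Finset.mem_image.mp hp
        exact Finset.card_pos.mpr ⟨fun l : {l // l ∈ Y} => w l.1,
          Finset.mem_filter.mpr ⟨Finset.mem_image.mpr ⟨w, hw, rfl⟩, rfl⟩⟩
      have hfibq : ∀ p ∈ projC C X,
          ((projC C Y).filter (fun e => ρ e = p)).card ≤ Fintype.card F := by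
        intro p hp
        have hinj : Set.InjOn (fun e : {l // l ∈ Y} → F => e ⟨j, Finset.mem_insert_self j X⟩)
            ((projC C Y).filter (fun e => ρ e = p)) := by
          intro e he e' he' hval
          simp only [Finset.coe_filter, Set.mem_setOf_eq] at he he'
          funext l
          rcases Finset.mem_insert.mp l.2 with h | h
          · have hl : l = ⟨j, Finset.mem_insert_self j X⟩ := Subtype.ext h
            rw [hl]; exact hval
          · exact (congrFun he.2 ⟨l.1, h⟩).trans (congrFun he'.2 ⟨l.1, h⟩).symm
        calc ((projC C Y).filter (fun e => ρ e = p)).card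
            ≤ (Finset.univ : Finset F).card :=
              Finset.card_le_card_of_injOn _ (fun _ _ => Finset.mem_univ _) hinj
          _ = Fintype.card F := Finset.card_univ
      have hXY : r X ≤ r Y := by
        have hsurj : Set.SurjOn ρ (projC C Y) (projC C X) := by
          intro p hp
          simp only [Finset.mem_coe] at hp
          obtain ⟨w, hw, rfl⟩ := Finset.mem_image.mp hp
          exact ⟨fun l => w l.1, Finset.mem_coe.mpr (Finset.mem_image.mpr ⟨w, hw, rfl⟩), rfl⟩
        have h1 := Finset.card_le_card_of_surjOn ρ hsurj
        rw [hr, hr] at h1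
        exact (Nat.pow_le_pow_iff_right hF).mp h1
      have hYX : r Y ≤ r X + 1 := by
        have h2 : (projC C Y).card ≤ (projC C X).card * Fintype.card F := by
          rw [hsum]
          calc ∑ p ∈ projC C X, ((projC C Y).filter (fun e => ρ e = p)).card
              ≤ ∑ _p ∈ projC C X, Fintype.card F := Finset.sum_le_sum hfibq
            _ = (projC C X).card * Fintype.card F := by
                rw [Finset.sum_const, smul_eq_mul]
        rw [hr, hr, ← pow_succ] at h2
        exact (Nat.pow_le_pow_iff_right hF).mp h2
      set pc : {l // l ∈ X} → F := fun l => c l.1 with hpcdef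
      have hpc : pc ∈ projC C X := Finset.mem_image.mpr ⟨c, hc, rfl⟩
      set A := C.filter (fun w => ∀ l ∈ X, w l = c l) with hAdef
      set σ : (Fin n → F) → ({l // l ∈ Y} → F) := fun w l => w l.1 with hσdef
      have hmaps2 : ∀ w ∈ A, σ w ∈ (projC C Y).filter (fun e => ρ e = pc) := by
        intro w hw
        obtain ⟨hwC, hagree⟩ := Finset.mem_filter.mp hw
        refine Finset.mem_filter.mpr ⟨Finset.mem_image.mpr ⟨w, hwC, rfl⟩, ?_⟩
        funext l; exact hagree l.1 l.2
      have hsum2 : A.card = ∑ e ∈ (projC C Y).filter (fun e => ρ e = pc),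
          (A.filter (fun w => σ w = e)).card :=
        Finset.card_eq_sum_card_fiberwise hmaps2
      have heach : ∀ e ∈ (projC C Y).filter (fun e => ρ e = pc),
          (A.filter (fun w => σ w = e)).card = Fintype.card F ^ (k - r Y) := by
        intro e he
        obtain ⟨heY, heρ⟩ := Finset.mem_filter.mp he
        obtain ⟨w', hw', rfl⟩ := Finset.mem_image.mp heY
        have hset : A.filter (fun w => σ w = σ w') = C.filter (fun w => ∀ l ∈ Y, w l = w' l) := by
          ext w
          constructor
          · intro hw
            obtain ⟨hwA, hσ⟩ := Finset.mem_filter.mp hw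
            obtain ⟨hwC, _⟩ := Finset.mem_filter.mp hwA
            exact Finset.mem_filter.mpr ⟨hwC, fun l hl => congrFun hσ ⟨l, hl⟩⟩
          · intro hw
            obtain ⟨hwC, hY'⟩ := Finset.mem_filter.mp hw
            have hcX : ∀ l ∈ X, w l = c l := by
              intro l hl
              have h1 : w l = w' l := hY' l (Finset.mem_insert_of_mem hl)
              have h2 : w' l = c l := congrFun heρ ⟨l, hl⟩
              exact h1.trans h2
            exact Finset.mem_filter.mpr ⟨Finset.mem_filter.mpr ⟨hwC, hcX⟩,
              funext fun l => hY' l.1 l.2⟩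
        rw [hset]
        exact ih Y hYm w' hw'
      have hA : A.card = ((projC C Y).filter (fun e => ρ e = pc)).card
          * Fintype.card F ^ (k - r Y) := by
        rw [hsum2, Finset.sum_congr rfl heach, Finset.sum_const, smul_eq_mul]
      rcases (by omega : r Y = r X ∨ r Y = r X + 1) with hcase | hcase
      · have hall : ((projC C Y).filter (fun e => ρ e = pc)).card = 1 := by
          by_contra hne
          have hgt : 1 < ((projC C Y).filter (fun e => ρ e = pc)).card :=
            lt_of_le_of_ne (hfib1 pc hpc) (Ne.symm hne)
          have hlt : (projC C X).card < (projC C Y).card := by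
            rw [hsum]
            calc (projC C X).card = ∑ _p ∈ projC C X, 1 := by
                  rw [Finset.sum_const, smul_eq_mul, mul_one]
              _ < _ := Finset.sum_lt_sum hfib1 ⟨pc, hpc, hgt⟩
          rw [hr, hr, hcase] at hlt
          exact lt_irrefl _ hlt
        rw [hA, hall, one_mul, hcase]
      · have hall : ((projC C Y).filter (fun e => ρ e = pc)).card = Fintype.card F := by
          by_contra hne
          have hlt' : ((projC C Y).filter (fun e => ρ e = pc)).card < Fintype.card F :=
            lt_of_le_of_ne (hfibq pc hpc) hne
          have hlt : (projC C Y).card < (projC C X).card * Fintype.card F := by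
            rw [hsum]
            calc ∑ p ∈ projC C X, ((projC C Y).filter (fun e => ρ e = p)).card
                < ∑ _p ∈ projC C X, Fintype.card F := Finset.sum_lt_sum hfibq ⟨pc, hpc, hlt'⟩
              _ = (projC C X).card * Fintype.card F := by rw [Finset.sum_const, smul_eq_mul]
          rw [hr, hr, ← pow_succ, ← hcase] at hlt
          exact lt_irrefl _ hlt
        have hrYk : r Y ≤ k := projC_rank_le hF C hCk r hr Y
        rw [hA, hall, hcase]
        rw [← pow_succ']
        congr 1
        omega

end TrellisAux

lemma trellis_prefix_count
    {F : Type*} [Fintype F] [DecidableEq F] (hF : 1 < Fintype.card F)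
    {n k : ℕ} (C : Finset (Fin n → F)) (hC : C.card = Fintype.card F ^ k)
    (r : Finset (Fin n) → ℕ)
    (hr : ∀ X : Finset (Fin n), (projC C X).card = Fintype.card F ^ r X)
    (i : ℕ) :
    Fintype.card F ^ (r (Finset.univ.filter (fun j : Fin n => (j : ℕ) < i)))
      ≤ (trellisVertices C i).card
        * Fintype.card F ^ (k - r (Finset.univ.filter (fun j : Fin n => i ≤ (j : ℕ)))) := by
  set q := Fintype.card F with hq
  set P : Finset (Fin n) := Finset.univ.filter (fun j : Fin n => (j : ℕ) < i) with hP
  set Q : Finset (Fin n) := Finset.univ.filter (fun j : Fin n => i ≤ (j : ℕ)) with hQ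
  classical
  set Φ : ({j // j ∈ P} → F) → Finset ({ j : Fin n // i ≤ (j : ℕ) } → F) :=
    fun p => (C.filter (fun w => ∀ j : {j // j ∈ P}, w j.1 = p j)).image
      (fun w => fun j : { j : Fin n // i ≤ (j : ℕ) } => w j.1) with hΦ
  have hmemP : ∀ j : Fin n, j ∈ P ↔ (j : ℕ) < i := by
    intro j; simp [hP]
  have hmemQ : ∀ j : Fin n, j ∈ Q ↔ i ≤ (j : ℕ) := by
    intro j; simp [hQ]
  have hΦres : ∀ c ∈ C, Φ (fun j : {j // j ∈ P} => c j.1)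
      = (C.filter (fun w => ∀ j : Fin n, (j : ℕ) < i → w j = c j)).image
        (fun w => fun j : { j : Fin n // i ≤ (j : ℕ) } => w j.1) := by
    intro c _
    have : C.filter (fun w => ∀ j : {j // j ∈ P}, w j.1 = c j.1)
        = C.filter (fun w => ∀ j : Fin n, (j : ℕ) < i → w j = c j) := by
      apply Finset.filter_congr
      intro w _
      constructor
      · intro h j hj
        exact h ⟨j, (hmemP j).mpr hj⟩
      · intro h j
        exact h j.1 ((hmemP j.1).mp j.2)
    simp only [hΦ, this]
  have hmaps : ∀ p ∈ projC C P, Φ p ∈ trellisVertices C i := by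
    intro p hp
    obtain ⟨c, hc, rfl⟩ := Finset.mem_image.mp hp
    rw [hΦres c hc]
    exact Finset.mem_image.mpr ⟨c, hc, rfl⟩
  have hsum : (projC C P).card = ∑ v ∈ trellisVertices C i,
      ((projC C P).filter (fun p => Φ p = v)).card :=
    Finset.card_eq_sum_card_fiberwise hmaps
  have hfib : ∀ v ∈ trellisVertices C i,
      ((projC C P).filter (fun p => Φ p = v)).card ≤ q ^ (k - r Q) := by
    intro v hv
    obtain ⟨c0, hc0, rfl⟩ := Finset.mem_image.mp hv
    set e0 : { j : Fin n // i ≤ (j : ℕ) } → F := fun j => c0 j.1 with he0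
    have he0mem : e0 ∈ (C.filter (fun w => ∀ j : Fin n, (j : ℕ) < i → w j = c0 j)).image
        (fun w => fun j : { j : Fin n // i ≤ (j : ℕ) } => w j.1) :=
      Finset.mem_image.mpr ⟨c0, Finset.mem_filter.mpr ⟨hc0, fun _ _ => rfl⟩, rfl⟩
    set D := C.filter (fun w => ∀ l ∈ Q, w l = c0 l) with hD
    have hsurj : Set.SurjOn (fun (w : Fin n → F) (j : {j // j ∈ P}) => w j.1)
        (D : Set (Fin n → F))
        (((projC C P).filter (fun p => Φ p =
          (C.filter (fun w => ∀ j : Fin n, (j : ℕ) < i → w j = c0 j)).image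
            (fun w => fun j : { j : Fin n // i ≤ (j : ℕ) } => w j.1))) :
              Set ({j // j ∈ P} → F)) := by
      intro p hp
      simp only [Finset.mem_coe] at hp
      obtain ⟨hpP, hpΦ⟩ := Finset.mem_filter.mp hp
      have he0Φ : e0 ∈ Φ p := by rw [hpΦ]; exact he0mem
      obtain ⟨w, hw, hwe0⟩ := Finset.mem_image.mp he0Φ
      obtain ⟨hwC, hwp⟩ := Finset.mem_filter.mp hw
      refine ⟨w, ?_, ?_⟩
      · refine Finset.mem_coe.mpr (Finset.mem_filter.mpr ⟨hwC, ?_⟩)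
        intro l hl
        exact congrFun hwe0 ⟨l, (hmemQ l).mp hl⟩
      · funext j; exact hwp j
    have hle := Finset.card_le_card_of_surjOn _ hsurj
    have hDcard : D.card = q ^ (k - r Q) :=
      agree_card hF C hC r hr (n - Q.card) Q le_rfl c0 hc0
    rw [hDcard] at hle
    exact hle
  calc q ^ r P = (projC C P).card := (hr P).symm
    _ = _ := hsum
    _ ≤ ∑ _v ∈ trellisVertices C i, q ^ (k - r Q) := Finset.sum_le_sum hfib
    _ = (trellisVertices C i).card * q ^ (k - r Q) := by rw [Finset.sum_const, smul_eq_mul]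


/-- lower bound on the minimal trellis complexity of an almost affine
code: `log_q |V_i| ≥ k - k_i(C) - k_{n-i}(C)`, i.e.
`q^{k_i(C) + k_{n-i}(C)} · |V_i| ≥ q^k`, where
`k_i(C) = k - min{r(X) : |X| = n - i}` is the dimension/length profile. -/

theorem trellis_vertex_lower_bound
    {F : Type*} [Fintype F] [DecidableEq F] (hF : 1 < Fintype.card F)
    {n k : ℕ} (C : Finset (Fin n → F)) (hC : IsAlmostAffineCode n k C)
    (r : Finset (Fin n) → ℕ)
    (hr : ∀ X : Finset (Fin n), (projC C X).card = Fintype.card F ^ r X)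
    (kprof : ℕ → ℕ)
    (hkprof : ∀ i, kprof i =
      k - sInf {m : ℕ | ∃ X : Finset (Fin n), X.card = n - i ∧ r X = m})
    (i : ℕ) (hi1 : 1 ≤ i) (hi2 : i ≤ n) :
    Fintype.card F ^ k ≤
      Fintype.card F ^ (kprof i + kprof (n - i)) * (trellisVertices C i).card := by
  classical
  obtain ⟨hCk, -⟩ := hC
  set q := Fintype.card F with hq
  set P : Finset (Fin n) := Finset.univ.filter (fun j : Fin n => (j : ℕ) < i) with hP
  set Q : Finset (Fin n) := Finset.univ.filter (fun j : Fin n => i ≤ (j : ℕ)) with hQ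
  have hPcard : P.card = i := by
    have himg : P = Finset.univ.image (Fin.castLE hi2) := by
      ext j
      simp only [hP, Finset.mem_filter, Finset.mem_univ, true_and, Finset.mem_image]
      constructor
      · intro h; exact ⟨⟨j, h⟩, rfl⟩
      · rintro ⟨a, rfl⟩; exact a.2
    rw [himg, Finset.card_image_of_injective _ (Fin.castLE_injective hi2)]
    simp
  have hQcard : Q.card = n - i := by
    have h := Finset.card_filter_add_card_filter_not
      (s := (Finset.univ : Finset (Fin n))) (p := fun j : Fin n => (j : ℕ) < i)
    have hneg : (Finset.univ.filter (fun j : Fin n => ¬ (j : ℕ) < i)) = Q := by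
      apply Finset.filter_congr; intro j _; simp [not_lt]
    rw [hneg, ← hP, hPcard] at h
    simp only [Finset.card_univ, Fintype.card_fin] at h
    omega
  have hcount : q ^ r P ≤ (trellisVertices C i).card * q ^ (k - r Q) :=
    trellis_prefix_count hF C hCk r hr i
  have hrPk : r P ≤ k := projC_rank_le hF C hCk r hr P
  have hrQk : r Q ≤ k := projC_rank_le hF C hCk r hr Q
  have h1 : k - r Q ≤ kprof i := by
    rw [hkprof i]
    have hle : sInf {m : ℕ | ∃ X : Finset (Fin n), X.card = n - i ∧ r X = m} ≤ r Q :=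
      Nat.sInf_le ⟨Q, hQcard, rfl⟩
    omega
  have h2 : k - r P ≤ kprof (n - i) := by
    rw [hkprof (n - i)]
    have hsub : n - (n - i) = i := by omega
    have hle : sInf {m : ℕ | ∃ X : Finset (Fin n), X.card = n - (n - i) ∧ r X = m} ≤ r P :=
      Nat.sInf_le ⟨P, by rw [hsub]; exact hPcard, rfl⟩
    omega
  calc q ^ k = q ^ (k - r P) * q ^ (r P) := by rw [← pow_add]; congr 1; omega
    _ ≤ q ^ (k - r P) * ((trellisVertices C i).card * q ^ (k - r Q)) :=
        Nat.mul_le_mul_left _ hcount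
    _ = q ^ ((k - r Q) + (k - r P)) * (trellisVertices C i).card := by rw [pow_add]; ring
    _ ≤ q ^ (kprof i + kprof (n - i)) * (trellisVertices C i).card :=
        Nat.mul_le_mul_right _ (Nat.pow_le_pow_right (Nat.one_le_of_lt hF) (by omega))
end

section
/- With the wire-tap II scheme built from an almost affine code C, the sets C_m = { φ̃(w, m) : w ∈ C } for m ∈ F^{n−k} form a partition of F^n, and each C_m is an almost affine code with the same associated matroid as C. -/
/-- The extension `φ̃ : F^n × F^{n-k} → F^n` (with `n = k + m`) of
`φ : F^{n-k} × F^{n-k} → F^{n-k}`: it keeps the first `k` coordinates and applies `φ`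
to the last `m` ones. -/
def phiTilde {F : Type*} {k m : ℕ} (φ : (Fin m → F) → (Fin m → F) → (Fin m → F))
    (f : Fin (k + m) → F) (g : Fin m → F) : Fin (k + m) → F :=
  fun j =>
    if h : (j : ℕ) < k then f j
    else φ (fun l : Fin m => f ⟨k + l.1, by have := l.isLt; omega⟩) g
      ⟨(j : ℕ) - k, by have := j.isLt; omega⟩

/-- The coset `C_m = φ̃(C, m)` of the wire-tap II scheme. -/
def wiretapCoset {F : Type*} [DecidableEq F] {k m : ℕ}
    (C : Finset (Fin (k + m) → F)) (φ : (Fin m → F) → (Fin m → F) → (Fin m → F))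
    (mm : Fin m → F) : Finset (Fin (k + m) → F) :=
  C.image (fun w => phiTilde φ w mm)

def tailW {F : Type*} {k m : ℕ} (w : Fin (k + m) → F) : Fin m → F :=
  fun l => w ⟨k + l.1, by have := l.isLt; omega⟩

lemma phiTilde_lt {F : Type*} {k m : ℕ} (φ : (Fin m → F) → (Fin m → F) → (Fin m → F))
    (f : Fin (k + m) → F) (g : Fin m → F) (j : Fin (k + m)) (hj : (j : ℕ) < k) :
    phiTilde φ f g j = f j := dif_pos hj

lemma phiTilde_ge {F : Type*} {k m : ℕ} (φ : (Fin m → F) → (Fin m → F) → (Fin m → F))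
    (f : Fin (k + m) → F) (g : Fin m → F) (l : Fin m) :
    phiTilde φ f g ⟨k + l.1, by have := l.isLt; omega⟩ = φ (tailW f) g l := by
  unfold phiTilde
  rw [dif_neg (by simp)]
  congr 1
  ext
  simp

/-- the key agreement-transfer lemma -/
lemma key_agree {F : Type*} {k m : ℕ} (φ : (Fin m → F) → (Fin m → F) → (Fin m → F))
    (hφagree : ∀ (X : Finset (Fin m)) (g h mm : Fin m → F),
      (∀ x ∈ X, g x = h x) ↔ (∀ x ∈ X, φ g mm x = φ h mm x))
    (mm : Fin m → F) (X : Finset (Fin (k + m))) (w w' : Fin (k + m) → F) :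
    (∀ i ∈ X, w i = w' i) ↔ (∀ i ∈ X, phiTilde φ w mm i = phiTilde φ w' mm i) := by
  classical
  set X' : Finset (Fin m) :=
    Finset.univ.filter (fun l : Fin m => (⟨k + l.1, by have := l.isLt; omega⟩ : Fin (k + m)) ∈ X)
    with hX'
  have hmemX' : ∀ l : Fin m,
      l ∈ X' ↔ (⟨k + l.1, by have := l.isLt; omega⟩ : Fin (k + m)) ∈ X := by
    intro l; simp [hX']
  constructor
  · intro h i hi
    by_cases hik : (i : ℕ) < k
    · rw [phiTilde_lt _ _ _ _ hik, phiTilde_lt _ _ _ _ hik]; exact h i hi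
    · have htails : ∀ l ∈ X', tailW w l = tailW w' l := by
        intro l hl
        exact h _ ((hmemX' l).mp hl)
      have hall := (hφagree X' (tailW w) (tailW w') mm).mp htails
      have hik' : (i : ℕ) - k < m := by have := i.isLt; omega
      set l : Fin m := ⟨(i : ℕ) - k, hik'⟩ with hldef
      have hieq : (⟨k + l.1, by have := l.isLt; omega⟩ : Fin (k + m)) = i := by
        apply Fin.ext
        show k + ((i : ℕ) - k) = (i : ℕ)
        omega
      have hlX : l ∈ X' := (hmemX' l).mpr (by rw [hieq]; exact hi)
      have heq := hall l hlX
      have h1 : phiTilde φ w mm i = φ (tailW w) mm l := by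
        rw [← hieq]; exact phiTilde_ge φ w mm l
      have h2 : phiTilde φ w' mm i = φ (tailW w') mm l := by
        rw [← hieq]; exact phiTilde_ge φ w' mm l
      rw [h1, h2, heq]
  · intro h i hi
    by_cases hik : (i : ℕ) < k
    · have := h i hi
      rwa [phiTilde_lt _ _ _ _ hik, phiTilde_lt _ _ _ _ hik] at this
    · have htails : ∀ l ∈ X', φ (tailW w) mm l = φ (tailW w') mm l := by
        intro l hl
        have := h _ ((hmemX' l).mp hl)
        rwa [phiTilde_ge, phiTilde_ge] at this
      have hall := (hφagree X' (tailW w) (tailW w') mm).mpr htails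
      have hik' : (i : ℕ) - k < m := by have := i.isLt; omega
      set l : Fin m := ⟨(i : ℕ) - k, hik'⟩ with hldef
      have hieq : (⟨k + l.1, by have := l.isLt; omega⟩ : Fin (k + m)) = i := by
        apply Fin.ext
        show k + ((i : ℕ) - k) = (i : ℕ)
        omega
      have hlX : l ∈ X' := (hmemX' l).mpr (by rw [hieq]; exact hi)
      have heq := hall l hlX
      rw [← hieq]
      exact heq

lemma card_image_eq_of_iff {α γ δ : Type*} [DecidableEq γ] [DecidableEq δ]
    (C : Finset α) (r : α → γ) (s : α → δ)
    (h : ∀ a ∈ C, ∀ b ∈ C, r a = r b ↔ s a = s b) :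
    (C.image r).card = (C.image s).card := by
  classical
  apply Finset.card_bij (fun g hg => s (Finset.mem_image.mp hg).choose)
  · intro g hg
    obtain ⟨ha, _⟩ := (Finset.mem_image.mp hg).choose_spec
    exact Finset.mem_image_of_mem s ha
  · intro g1 h1 g2 h2 heq
    obtain ⟨ha1, he1⟩ := (Finset.mem_image.mp h1).choose_spec
    obtain ⟨ha2, he2⟩ := (Finset.mem_image.mp h2).choose_spec
    rw [← he1, ← he2]
    exact (h _ ha1 _ ha2).mpr heq
  · intro d hd
    obtain ⟨a, ha, rfl⟩ := Finset.mem_image.mp hd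
    refine ⟨r a, Finset.mem_image_of_mem r ha, ?_⟩
    obtain ⟨ha', he'⟩ := (Finset.mem_image.mp (Finset.mem_image_of_mem r ha)).choose_spec
    exact ((h _ ha' _ ha).mp he')

/-- in the wire-tap channel of type II scheme built from an almost affine
code `C` of dimension `k` and length `n = k + m` (with `B = {1,…,k}` a basis of `M_C`,
so that codewords are determined by their restriction to `B`), the sets
`C_m = φ̃(C, m)`, `m ∈ F^{n-k}`, form a partition of `F^n`, and each `C_m` is an almost
affine code with the same associated matroid as `C`. -/
theorem wiretap_cosets_partition_and_matroid
    {F : Type*} [Fintype F] [DecidableEq F] (hF : 1 < Fintype.card F)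
    {k m : ℕ} (C : Finset (Fin (k + m) → F)) (hC : IsAlmostAffineCode (k + m) k C)
    (hB : ∀ w ∈ C, ∀ w' ∈ C, (∀ j : Fin (k + m), (j : ℕ) < k → w j = w' j) → w = w')
    (φ : (Fin m → F) → (Fin m → F) → (Fin m → F))
    (hφbij : ∀ f, Function.Bijective (φ f))
    (hφagree : ∀ (X : Finset (Fin m)) (g h mm : Fin m → F),
      (∀ x ∈ X, g x = h x) ↔ (∀ x ∈ X, φ g mm x = φ h mm x)) :
    (∀ t : Fin (k + m) → F, ∃! mm : Fin m → F, t ∈ wiretapCoset C φ mm) ∧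
    (∀ mm : Fin m → F, IsAlmostAffineCode (k + m) k (wiretapCoset C φ mm) ∧
      ∀ X : Finset (Fin (k + m)),
        (projC (wiretapCoset C φ mm) X).card = (projC C X).card) := by
  classical
  set res : (Fin (k + m) → F) → (Fin k → F) :=
    fun w i => w ⟨i.1, by have := i.isLt; omega⟩ with hres
  have hres_inj : Set.InjOn res (C : Set (Fin (k + m) → F)) := by
    intro w hw w' hw' hrw
    apply hB w hw w' hw'
    intro j hj
    have := congrFun hrw ⟨(j : ℕ), hj⟩
    simpa [hres] using this
  have hcard_res : (C.image res).card = C.card :=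
    Finset.card_image_of_injOn hres_inj
  have hres_surj : ∀ p : Fin k → F, ∃ w ∈ C, res w = p := by
    have huniv : C.image res = Finset.univ := by
      apply Finset.eq_univ_of_card
      rw [hcard_res, hC.1]
      simp [Fintype.card_fun]
    intro p
    have : p ∈ C.image res := huniv ▸ Finset.mem_univ p
    exact Finset.mem_image.mp this
  constructor
  · -- partition
    intro t
    obtain ⟨w, hw, hwr⟩ := hres_surj (res t)
    obtain ⟨mm, hmm⟩ := (hφbij (tailW w)).2 (tailW t)
    have hmem : t ∈ wiretapCoset C φ mm := by
      rw [wiretapCoset, Finset.mem_image]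
      refine ⟨w, hw, ?_⟩
      funext j
      by_cases hj : (j : ℕ) < k
      · rw [phiTilde_lt _ _ _ _ hj]
        have := congrFun hwr ⟨(j : ℕ), hj⟩
        simpa [hres] using this
      · have hjk : (j : ℕ) - k < m := by have := j.isLt; omega
        set l : Fin m := ⟨(j : ℕ) - k, hjk⟩ with hldef
        have hieq : (⟨k + l.1, by have := l.isLt; omega⟩ : Fin (k + m)) = j := by
          apply Fin.ext
          show k + ((j : ℕ) - k) = (j : ℕ)
          omega
        rw [← hieq]
        exact (phiTilde_ge φ w mm l).trans (congrFun hmm l)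
    refine ⟨mm, hmem, ?_⟩
    intro mm' hmem'
    rw [wiretapCoset, Finset.mem_image] at hmem'
    obtain ⟨w', hw', hw't⟩ := hmem'
    have hww' : w' = w := by
      apply hB w' hw' w hw
      intro j hj
      have h1 : w' j = t j := by rw [← hw't]; exact (phiTilde_lt _ _ _ _ hj).symm
      have h2 : w j = t j := by
        have := congrFun hwr ⟨(j : ℕ), hj⟩
        simpa [hres] using this
      rw [h1, h2]
    subst hww'
    apply (hφbij (tailW w')).1
    rw [hmm]
    funext l
    have := congrFun hw't ⟨k + l.1, by have := l.isLt; omega⟩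
    rw [phiTilde_ge] at this
    exact this
  · -- each coset is almost affine with same projections
    intro mm
    have hinj : Set.InjOn (fun w => phiTilde φ w mm) (C : Set (Fin (k + m) → F)) := by
      intro w hw w' hw' hww'
      funext i
      exact (key_agree φ hφagree mm Finset.univ w w').mpr
        (fun j _ => congrFun hww' j) i (Finset.mem_univ i)
    have hcard : (wiretapCoset C φ mm).card = C.card :=
      Finset.card_image_of_injOn hinj
    have hproj : ∀ X : Finset (Fin (k + m)),
        (projC (wiretapCoset C φ mm) X).card = (projC C X).card := by
      intro X
      have h1 : projC (wiretapCoset C φ mm) X =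
          C.image (fun c (i : { i // i ∈ X }) => phiTilde φ c mm i.1) := by
        rw [projC, wiretapCoset, Finset.image_image]
        rfl
      rw [h1, projC]
      apply (card_image_eq_of_iff C _ _ ?_).symm
      intro a ha b hb
      constructor
      · intro hab
        funext i
        exact (key_agree φ hφagree mm X a b).mp
          (fun j hj => congrFun hab ⟨j, hj⟩) i.1 i.2
      · intro hab
        funext i
        exact (key_agree φ hφagree mm X a b).mpr
          (fun j hj => congrFun hab ⟨j, hj⟩) i.1 i.2
    refine ⟨⟨?_, ?_⟩, hproj⟩
    · rw [hcard, hC.1]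
    · intro X
      obtain ⟨s, hs⟩ := hC.2 X
      exact ⟨s, by rw [hproj X, hs]⟩
end

section
/- The r-folded Reed–Solomon code FRS_{q,γ,r,k} is a multilinear code over F_q^r whose associated matroid is the uniform matroid U_{k/r,(q−1)/r}; consequently its generalized Hamming weights are d_i = (q−1−k)/r + i for 1 ≤ i ≤ k/r, i.e., the code is MDS. -/
/-- Projection of a subspace of `(F_q^r)^n = (Fin n → Fin r → K)` to the coordinates
in `X ⊆ {1,…,n}`. -/
noncomputable def projSub {K : Type*} [Field K] {r n : ℕ}
    (C : Submodule K (Fin n → Fin r → K)) (X : Finset (Fin n)) :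
    Submodule K ({ i // i ∈ X } → Fin r → K) :=
  C.map (LinearMap.funLeft K (Fin r → K) (fun i : { i // i ∈ X } => (i : Fin n)))

def IsMultilinearCode {K : Type*} [Field K] (r n : ℕ)
    (C : Submodule K (Fin n → Fin r → K)) : Prop :=
  ∀ X : Finset (Fin n), r ∣ Module.finrank K (projSub C X)

/-! The folded code is the block-curried image of the rectangular Vandermonde matrix `(ν_p ^ l)`
whose nodes `ν_(x,j) = γ^(x r + j + 1)` are pairwise distinct, because `γ` has order `q - 1`.
Projecting onto a set `X` of blocks keeps the `r |X|` rows indexed by `X`, and a rectangular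
Vandermonde matrix with distinct nodes has full rank `min (r |X|) k`, witnessed by a square
Vandermonde minor. So the matroid is uniform, and the generalized Hamming weights come from
solving `min (r (n - |X|)) k + r i = k` for `|X|`. -/

namespace Matrix

theorem rectVandermonde_submatrix {R α β : Type*} [CommRing R] (v w : α → R) (n : ℕ)
    (f : β → α) :
    (rectVandermonde v w n).submatrix f id = rectVandermonde (v ∘ f) (w ∘ f) n :=
  rfl

theorem rank_rectVandermonde_one {K ι : Type*} [Field K] [Fintype ι] {ν : ι → K}
    (hν : Function.Injective ν) (k : ℕ) :
    (rectVandermonde ν 1 k).rank = min (Fintype.card ι) k := by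
  refine le_antisymm
    (le_min (rank_le_card_height _) ((rank_le_card_width _).trans_eq (Fintype.card_fin k))) ?_
  set s := min (Fintype.card ι) k
  let rows : Fin s → ι := (Fintype.equivFin ι).symm ∘ Fin.castLE (min_le_left _ _)
  have hrows : Function.Injective rows :=
    (Fintype.equivFin ι).symm.injective.comp (Fin.castLE_injective _)
  have hsquare : (rectVandermonde ν 1 k).submatrix rows (Fin.castLE (min_le_right _ _)) =
      vandermonde (ν ∘ rows) := by
    ext i j
    simp [rectVandermonde_apply, vandermonde_apply, rows]
  have hunit : IsUnit (vandermonde (ν ∘ rows)) := by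
    rw [isUnit_iff_isUnit_det, isUnit_iff_ne_zero, det_vandermonde_ne_zero_iff]
    exact hν.comp hrows
  calc s = (vandermonde (ν ∘ rows)).rank := by rw [rank_of_isUnit _ hunit, Fintype.card_fin]
    _ ≤ (rectVandermonde ν 1 k).rank := hsquare ▸ rank_submatrix_le _ _ _

end Matrix

theorem pow_succ_injective_of_forall_ne_zero_exists_pow {K : Type*} [Field K] [Fintype K]
    {γ : K} (hγ : ∀ z : K, z ≠ 0 → ∃ t : ℕ, γ ^ t = z) :
    Function.Injective fun e : Fin (Fintype.card K - 1) => γ ^ ((e : ℕ) + 1) := by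
  classical
  by_cases hγ0 : γ = 0
  · -- every nonzero element is a power of `0`, hence `1`, so `K = 𝔽₂` and the domain is `Fin 1`
    have hcard : Fintype.card K ≤ 2 := by
      have hsub : (Finset.univ : Finset K) ⊆ {0, 1} := by
        intro z _
        by_cases hz : z = 0
        · simp [hz]
        obtain ⟨t, rfl⟩ := hγ z hz
        cases t <;> simp_all
      simpa using (Finset.card_le_card hsub).trans Finset.card_le_two
    intro a b _
    ext
    omega
  · have horder : orderOf γ = Fintype.card K - 1 := by
      let u := Units.mk0 γ hγ0
      have hgen : ∀ z : Kˣ, z ∈ Subgroup.zpowers u := by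
        intro z
        obtain ⟨t, ht⟩ := hγ z z.ne_zero
        have hut : u ^ t = z := Units.ext (by simpa [u] using ht)
        exact hut ▸ Subgroup.npow_mem_zpowers u t
      rw [← Units.val_mk0 hγ0, orderOf_units, orderOf_eq_card_of_forall_mem_zpowers hgen,
        Nat.card_eq_fintype_card, Fintype.card_units]
    intro a b hab
    have hab' : γ ^ (a : ℕ) = γ ^ (b : ℕ) := by
      simpa only [pow_succ, mul_left_inj' hγ0] using hab
    have ha : (a : ℕ) < orderOf γ := a.isLt.trans_eq horder.symm
    have hb : (b : ℕ) < orderOf γ := b.isLt.trans_eq horder.symm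
    exact Fin.ext (pow_injOn_Iio_orderOf ha hb hab')

section FoldedCode

variable {K κ : Type*} [Field K] [Fintype κ] {n r : ℕ}

def foldedCode (G : Matrix (Fin n × Fin r) κ K) : Submodule K (Fin n → Fin r → K) :=
  (LinearMap.range G.mulVecLin).map (LinearEquiv.curry K K (Fin n) (Fin r)).toLinearMap

theorem mem_foldedCode (G : Matrix (Fin n × Fin r) κ K) (w : Fin n → Fin r → K) :
    w ∈ foldedCode G ↔ ∃ a : κ → K, ∀ x j, w x j = G.mulVec a (x, j) := by
  simp [foldedCode, funext_iff, eq_comm]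

theorem finrank_projSub_foldedCode (G : Matrix (Fin n × Fin r) κ K) (X : Finset (Fin n)) :
    Module.finrank K (projSub (foldedCode G) X) =
      (G.submatrix (fun p : X × Fin r => ((p.1 : Fin n), p.2)) id).rank := by
  have hcomm : LinearMap.funLeft K (Fin r → K) (fun i : X => (i : Fin n)) ∘ₗ
      (LinearEquiv.curry K K (Fin n) (Fin r)).toLinearMap ∘ₗ G.mulVecLin =
      (LinearEquiv.curry K K X (Fin r)).toLinearMap ∘ₗ
        (G.submatrix (fun p : X × Fin r => ((p.1 : Fin n), p.2)) id).mulVecLin := by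
    ext a i j
    simp [Matrix.mulVec, dotProduct]
  rw [projSub, foldedCode, ← LinearMap.range_comp, ← LinearMap.range_comp, hcomm,
    LinearMap.range_comp, LinearEquiv.finrank_map_eq, Matrix.rank]

theorem finrank_projSub_foldedCode_rectVandermonde {ν : Fin n × Fin r → K}
    (hν : Function.Injective ν) (k : ℕ) (X : Finset (Fin n)) :
    Module.finrank K (projSub (foldedCode (Matrix.rectVandermonde ν 1 k)) X) =
      min (r * X.card) k := by
  have hrows : Function.Injective fun p : X × Fin r => ((p.1 : Fin n), p.2) :=
    fun _ _ h => Prod.ext (Subtype.ext (Prod.ext_iff.mp h).1) (Prod.ext_iff.mp h).2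
  rw [finrank_projSub_foldedCode, Matrix.rectVandermonde_submatrix, Pi.one_comp,
    Matrix.rank_rectVandermonde_one (hν.comp hrows) k, Fintype.card_prod, Fintype.card_coe,
    Fintype.card_fin, mul_comm]

end FoldedCode

section UniformCode

variable {K : Type*} [Field K] {n r k : ℕ} {C : Submodule K (Fin n → Fin r → K)}

theorem IsMultilinearCode.of_finrank_projSub_eq_min (hrk : r ∣ k)
    (hC : ∀ X : Finset (Fin n), Module.finrank K (projSub C X) = min (r * X.card) k) :
    IsMultilinearCode r n C := by
  intro X
  rw [hC X]
  rcases min_choice (r * X.card) k with h | h <;> rw [h]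
  exacts [dvd_mul_right r X.card, hrk]

theorem sInf_card_eq_of_finrank_projSub_eq_min
    (hC : ∀ X : Finset (Fin n), Module.finrank K (projSub C X) = min (r * X.card) k)
    (hrk : r ∣ k) (hk : k ≤ n * r) {i : ℕ} (hi : 1 ≤ i) (hik : i ≤ k / r) :
    sInf {c : ℕ | ∃ X : Finset (Fin n), X.card = c ∧
        Module.finrank K (projSub C Xᶜ) + r * i = k} = (n * r - k) / r + i := by
  obtain ⟨t, rfl⟩ := hrk
  have hr : 0 < r := Nat.pos_of_ne_zero (by rintro rfl; simp at hik; omega)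
  rw [Nat.mul_div_cancel_left t hr] at hik
  have htn : t ≤ n := Nat.le_of_mul_le_mul_left (hk.trans_eq (mul_comm n r)) hr
  have hcond : ∀ X : Finset (Fin n),
      Module.finrank K (projSub C Xᶜ) + r * i = r * t ↔ X.card = n - t + i := by
    intro X
    have hX : X.card ≤ n := (Finset.card_le_univ X).trans_eq (Fintype.card_fin n)
    rw [hC, Finset.card_compl, Fintype.card_fin, min_mul_mul_left, ← mul_add,
      Nat.mul_left_cancel_iff hr]
    omega
  have hset : {c : ℕ | ∃ X : Finset (Fin n), X.card = c ∧
      Module.finrank K (projSub C Xᶜ) + r * i = r * t} = {n - t + i} := by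
    ext c
    simp only [Set.mem_ofPred_eq, Set.mem_singleton_iff, hcond]
    constructor
    · rintro ⟨X, rfl, hX⟩
      exact hX
    · rintro rfl
      obtain ⟨X, -, hX⟩ := Finset.exists_subset_card_eq (s := (Finset.univ : Finset (Fin n)))
        (n := n - t + i) (by simp; omega)
      exact ⟨X, hX, hX⟩
  rw [hset, csInf_singleton, mul_comm r t, ← Nat.sub_mul, Nat.mul_div_cancel _ hr]

end UniformCode

theorem folded_reed_solomon_multilinear_uniform_MDS_general
    {K : Type*} [Field K] [Fintype K] (m r k : ℕ)
    (hq : Fintype.card K = m * r + 1)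
    (hrk : r ∣ k) (hk : k ≤ m * r)
    (γ : K) (hγ : ∀ z : K, z ≠ 0 → ∃ t : ℕ, γ ^ t = z)
    (Csub : Submodule K (Fin m → Fin r → K))
    (hCsub : (Csub : Set (Fin m → Fin r → K)) =
      {w | ∃ a : Fin k → K, ∀ (x : Fin m) (j : Fin r),
        w x j = ∑ l : Fin k, a l * γ ^ ((l : ℕ) * (x.1 * r + j.1 + 1))}) :
    IsMultilinearCode r m Csub ∧
    (∀ X : Finset (Fin m),
      Module.finrank K (projSub Csub X) = min (r * X.card) k) ∧
    (∀ i : ℕ, 1 ≤ i → i ≤ k / r →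
      sInf {c : ℕ | ∃ X : Finset (Fin m), X.card = c ∧
          Module.finrank K (projSub Csub Xᶜ) + r * i = k}
        = (m * r - k) / r + i) := by
  let index : Fin m × Fin r ≃ Fin (Fintype.card K - 1) :=
    finProdFinEquiv.trans (finCongr (by omega))
  let ν : Fin m × Fin r → K := fun p => γ ^ ((index p : ℕ) + 1)
  have hν : Function.Injective ν :=
    (pow_succ_injective_of_forall_ne_zero_exists_pow hγ).comp index.injective
  have hentry : ∀ (a : Fin k → K) (x : Fin m) (j : Fin r),
      (Matrix.rectVandermonde ν 1 k).mulVec a (x, j) =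
        ∑ l : Fin k, a l * γ ^ ((l : ℕ) * (x.1 * r + j.1 + 1)) := by
    intro a x j
    have hindex : (index (x, j) : ℕ) = x.1 * r + j.1 := by
      simp [index]
      ring
    simp only [Matrix.mulVec, dotProduct, Matrix.rectVandermonde_apply, ν, hindex]
    refine Finset.sum_congr rfl fun l _ => ?_
    rw [Pi.one_apply, one_pow, mul_one, mul_comm, ← pow_mul, mul_comm (l : ℕ)]
  have hC : Csub = foldedCode (Matrix.rectVandermonde ν 1 k) := by
    refine SetLike.ext' (hCsub.trans (Set.ext fun w => ?_))
    simp only [SetLike.mem_coe, mem_foldedCode, hentry]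
    rfl
  have hrank : ∀ X : Finset (Fin m),
      Module.finrank K (projSub Csub X) = min (r * X.card) k :=
    hC ▸ finrank_projSub_foldedCode_rectVandermonde hν k
  exact ⟨.of_finrank_projSub_eq_min hrk hrank, hrank,
    fun i hi hik => sInf_card_eq_of_finrank_projSub_eq_min hrank hrk hk hi hik⟩

/-- let `q = m·r + 1` be the cardinality of the finite field `K`,
`γ` a generator of `K*`, `r ∣ k`, `k ≤ q - 1 = m·r`, `r ≥ 2`.  The `r`-folded
Reed–Solomon code (grouping consecutive `r` coordinates of the Reed–Solomon code of
dimension `k` with generator matrix `(γ^{(i-1)j})`) is a multilinear code over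
`F_q^r`, its associated matroid is the uniform matroid `U_{k/r,(q-1)/r}` (i.e. the
`F_q`-dimension of the projection to `X` is `min(r·|X|, k)`), and consequently its
generalized Hamming weights are `d_i = (q-1-k)/r + i` for `1 ≤ i ≤ k/r` (an MDS code).
Here `d_i = min{|X| : dual nullity of X is i}`, the dual nullity condition being
`rank(E∖X) + i = k/r`, i.e. `finrank(proj_{E∖X}) + r·i = k`. -/
theorem folded_reed_solomon_multilinear_uniform_MDS
    {K : Type*} [Field K] [Fintype K] (m r k : ℕ)
    (hq : Fintype.card K = m * r + 1) (hr2 : 2 ≤ r) (hm1 : 1 ≤ m)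
    (hrk : r ∣ k) (hk : k ≤ m * r)
    (γ : K) (hγ : ∀ z : K, z ≠ 0 → ∃ t : ℕ, γ ^ t = z)
    (Csub : Submodule K (Fin m → Fin r → K))
    (hCsub : (Csub : Set (Fin m → Fin r → K)) =
      {w | ∃ a : Fin k → K, ∀ (x : Fin m) (j : Fin r),
        w x j = ∑ l : Fin k, a l * γ ^ ((l : ℕ) * (x.1 * r + j.1 + 1))}) :
    IsMultilinearCode r m Csub ∧
    (∀ X : Finset (Fin m),
      Module.finrank K (projSub Csub X) = min (r * X.card) k) ∧
    (∀ i : ℕ, 1 ≤ i → i ≤ k / r →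
      sInf {c : ℕ | ∃ X : Finset (Fin m), X.card = c ∧
          Module.finrank K (projSub Csub Xᶜ) + r * i = k}
        = (m * r - k) / r + i) :=
  folded_reed_solomon_multilinear_uniform_MDS_general m r k hq hrk hk γ hγ Csub hCsub
end

section
/- Let C be an almost affine code of dimension k, c̃ ∈ C, and suppose c_1,...,c_i ∈ C are c̃-minimal non-redundant codewords with |⋃_{j=1}^i Supp(c_j, c̃)| = d_i(C). Then there exists an almost affine subcode D of C of dimension i containing c̃, c_1,...,c_i, with |Supp(D)| = d_i(C). -/
/-- `c` is a `ct`-minimal codeword of `C`: `c ≠ ct` and its `ct`-support is minimal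
among the nonempty `ct`-supports of codewords of `C`. -/
def IsMinimalWord {F : Type*} [DecidableEq F] {n : ℕ} (C : Finset (Fin n → F))
    (ct c : Fin n → F) : Prop :=
  c ∈ C ∧ c ≠ ct ∧ ∀ w ∈ C, w ≠ ct → suppW w ct ⊆ suppW c ct → suppW w ct = suppW c ct

namespace AAC

set_option linter.unusedSectionVars false

variable {F : Type*} [Fintype F] [DecidableEq F] {n k : ℕ}

lemma projC_card_mono (C : Finset (Fin n → F)) {X Z : Finset (Fin n)} (h : X ⊆ Z) :
    (projC C X).card ≤ (projC C Z).card := by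
  have himg : projC C X = (projC C Z).image (fun p (i : {i // i ∈ X}) => p ⟨i.1, h i.2⟩) := by
    unfold projC
    rw [Finset.image_image]
    rfl
  rw [himg]
  exact Finset.card_image_le

variable {C : Finset (Fin n → F)} {r : Finset (Fin n) → ℕ}

lemma r_mono (hF : 1 < Fintype.card F) (hr : ∀ X, (projC C X).card = Fintype.card F ^ r X)
    {X Z : Finset (Fin n)} (h : X ⊆ Z) : r X ≤ r Z := by
  have hm := projC_card_mono C h
  rw [hr, hr] at hm
  exact (Nat.pow_le_pow_iff_right hF).mp hm

lemma r_step (hF : 1 < Fintype.card F) (hr : ∀ X, (projC C X).card = Fintype.card F ^ r X)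
    (e : Fin n) (X : Finset (Fin n)) : r (insert e X) ≤ r X + 1 := by
  have hinj : Set.InjOn
      (fun p : {i // i ∈ insert e X} → F =>
        ((fun i : {i // i ∈ X} => p ⟨i.1, Finset.mem_insert_of_mem i.2⟩),
          p ⟨e, Finset.mem_insert_self e X⟩))
      (projC C (insert e X)) := by
    intro p₁ _ p₂ _ hpq
    have h1 := congrArg Prod.fst hpq
    have h2 := congrArg Prod.snd hpq
    funext j
    rcases Finset.mem_insert.mp j.2 with hj | hj
    · have hje : j = ⟨e, Finset.mem_insert_self e X⟩ := Subtype.ext hj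
      rw [hje]; exact h2
    · exact congrFun h1 ⟨j.1, hj⟩
  have hcard : (projC C (insert e X)).card ≤ ((projC C X) ×ˢ (Finset.univ : Finset F)).card :=
    Finset.card_le_card_of_injOn _
      (fun p hp => by
        obtain ⟨w, hw, rfl⟩ := Finset.mem_image.mp hp
        exact Finset.mem_product.mpr ⟨Finset.mem_image.mpr ⟨w, hw, rfl⟩, Finset.mem_univ _⟩)
      hinj
  rw [Finset.card_product, Finset.card_univ, hr, hr, ← pow_succ] at hcard
  exact (Nat.pow_le_pow_iff_right hF).mp hcard

lemma r_univ (hF : 1 < Fintype.card F) (hC1 : C.card = Fintype.card F ^ k)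
    (hr : ∀ X, (projC C X).card = Fintype.card F ^ r X) : r Finset.univ = k := by
  have hinj : (projC C Finset.univ).card = C.card := by
    apply Finset.card_image_of_injOn
    intro c₁ _ c₂ _ he
    funext m
    exact congrFun he ⟨m, Finset.mem_univ m⟩
  have hpow : Fintype.card F ^ r Finset.univ = Fintype.card F ^ k := by
    rw [← hr, hinj, hC1]
  exact Nat.pow_right_injective hF hpow

lemma agreeOn_univ {c : Fin n → F} (hc : c ∈ C) : agreeOn C Finset.univ c = {c} := by
  ext w
  simp only [agreeOn, Finset.mem_filter, Finset.mem_singleton, Finset.mem_univ, true_implies]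
  constructor
  · rintro ⟨_, h⟩; funext m; exact h m
  · rintro rfl; exact ⟨hc, fun _ => rfl⟩

end AAC

namespace AAC

variable {F : Type*} [Fintype F] [DecidableEq F] {n k : ℕ}
variable {C : Finset (Fin n → F)} {r : Finset (Fin n) → ℕ}

lemma fiber_univ (hF : 1 < Fintype.card F) (hC1 : C.card = Fintype.card F ^ k)
    (hr : ∀ X, (projC C X).card = Fintype.card F ^ r X) {c : Fin n → F} (hc : c ∈ C) :
    (agreeOn C Finset.univ c).card * Fintype.card F ^ r Finset.univ = Fintype.card F ^ k := by
  rw [agreeOn_univ hc, Finset.card_singleton, one_mul, r_univ hF hC1 hr]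

lemma fiber_aux (hF : 1 < Fintype.card F) (hC1 : C.card = Fintype.card F ^ k)
    (hr : ∀ X, (projC C X).card = Fintype.card F ^ r X) :
    ∀ (m : ℕ) (X : Finset (Fin n)), Xᶜ.card ≤ m → ∀ c ∈ C,
      (agreeOn C X c).card * Fintype.card F ^ r X = Fintype.card F ^ k := by
  have hq : 0 < Fintype.card F := lt_trans zero_lt_one hF
  intro m
  induction m with
  | zero =>
    intro X hX c hc
    have hXu : X = Finset.univ := by
      have h0 : Xᶜ = ∅ := Finset.card_eq_zero.mp (Nat.le_zero.mp hX)
      rwa [Finset.compl_eq_empty_iff] at h0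
    subst hXu
    exact fiber_univ hF hC1 hr hc
  | succ m IH =>
    intro X hX c hc
    by_cases hXu : X = Finset.univ
    · subst hXu; exact fiber_univ hF hC1 hr hc
    · obtain ⟨e, heX⟩ : ∃ e, e ∈ Xᶜ := by
        have : Xᶜ.Nonempty := by
          rw [Finset.nonempty_iff_ne_empty]
          intro h0
          exact hXu (by rwa [Finset.compl_eq_empty_iff] at h0)
        exact this
      have he : e ∉ X := Finset.mem_compl.mp heX
      set X' := insert e X with hX'def
      have hcompl : X'ᶜ.card ≤ m := by
        have h1 : X'ᶜ = Xᶜ.erase e := Finset.compl_insert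
        have h2 : (Xᶜ.erase e).card = Xᶜ.card - 1 := Finset.card_erase_of_mem heX
        have h3 : 0 < Xᶜ.card := Finset.card_pos.mpr ⟨e, heX⟩
        rw [h1, h2]
        omega
      -- the restriction map
      set res' : ({i // i ∈ X'} → F) → ({i // i ∈ X} → F) :=
        fun p i => p ⟨i.1, Finset.mem_insert_of_mem i.2⟩ with hres'
      have h_into : ∀ p ∈ projC C X', res' p ∈ projC C X := by
        intro p hp
        obtain ⟨w, hw, rfl⟩ := Finset.mem_image.mp hp
        exact Finset.mem_image.mpr ⟨w, hw, rfl⟩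
      have hsum1 : (projC C X').card
          = ∑ p ∈ projC C X, ((projC C X').filter (fun p' => res' p' = p)).card :=
        Finset.card_eq_sum_card_fiberwise h_into
      have hB1 : ∀ p ∈ projC C X, 1 ≤ ((projC C X').filter (fun p' => res' p' = p)).card := by
        intro p hp
        obtain ⟨w, hw, rfl⟩ := Finset.mem_image.mp hp
        exact Finset.card_pos.mpr
          ⟨fun i => w i.1, Finset.mem_filter.mpr ⟨Finset.mem_image.mpr ⟨w, hw, rfl⟩, rfl⟩⟩
      have hB2 : ∀ p : {i // i ∈ X} → F,
          ((projC C X').filter (fun p' => res' p' = p)).card ≤ Fintype.card F := by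
        intro p
        have hinj : Set.InjOn (fun p' : {i // i ∈ X'} → F => p' ⟨e, Finset.mem_insert_self e X⟩)
            ((projC C X').filter (fun p' => res' p' = p)) := by
          intro p₁ h₁ p₂ h₂ hval
          have h₁' := (Finset.mem_filter.mp h₁).2
          have h₂' := (Finset.mem_filter.mp h₂).2
          funext j
          rcases Finset.mem_insert.mp j.2 with hj | hj
          · have hje : j = ⟨e, Finset.mem_insert_self e X⟩ := Subtype.ext hj
            rw [hje]; exact hval
          · exact congrFun (h₁'.trans h₂'.symm) ⟨j.1, hj⟩
        calc ((projC C X').filter (fun p' => res' p' = p)).card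
            ≤ (Finset.univ : Finset F).card :=
              Finset.card_le_card_of_injOn _ (fun _ _ => Finset.mem_univ _) hinj
          _ = Fintype.card F := Finset.card_univ
      -- bounds on r X'
      have hle1 : Fintype.card F ^ r X ≤ Fintype.card F ^ r X' := by
        rw [← hr, ← hr]; exact projC_card_mono C (Finset.subset_insert e X)
      have hle2 : Fintype.card F ^ r X' ≤ Fintype.card F ^ (r X + 1) := by
        rw [← hr X']
        rw [hsum1]
        calc ∑ p ∈ projC C X, ((projC C X').filter (fun p' => res' p' = p)).card
            ≤ ∑ _p ∈ projC C X, Fintype.card F := Finset.sum_le_sum (fun p _ => hB2 p)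
          _ = (projC C X).card * Fintype.card F := by rw [Finset.sum_const, smul_eq_mul]
          _ = Fintype.card F ^ (r X + 1) := by rw [hr, pow_succ]
      have hr1 : r X ≤ r X' := (Nat.pow_le_pow_iff_right hF).mp hle1
      have hr2 : r X' ≤ r X + 1 := (Nat.pow_le_pow_iff_right hF).mp hle2
      -- decompose the X-fiber of c into X'-fibers
      set p_c : {i // i ∈ X} → F := fun i => c i.1 with hpc_def
      have hpc : p_c ∈ projC C X := Finset.mem_image.mpr ⟨c, hc, rfl⟩
      have hmaps : ∀ w ∈ agreeOn C X c,
          (fun i : {i // i ∈ X'} => w i.1) ∈ (projC C X').filter (fun p' => res' p' = p_c) := by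
        intro w hw
        obtain ⟨hwC, hwa⟩ := Finset.mem_filter.mp hw
        refine Finset.mem_filter.mpr ⟨Finset.mem_image.mpr ⟨w, hwC, rfl⟩, ?_⟩
        funext i
        exact hwa i.1 i.2
      have hsum2 : (agreeOn C X c).card
          = ∑ p' ∈ (projC C X').filter (fun p' => res' p' = p_c),
              ((agreeOn C X c).filter (fun w => (fun i : {i // i ∈ X'} => w i.1) = p')).card :=
        Finset.card_eq_sum_card_fiberwise hmaps
      have hterm : ∀ p' ∈ (projC C X').filter (fun p' => res' p' = p_c),
          ((agreeOn C X c).filter (fun w => (fun i : {i // i ∈ X'} => w i.1) = p')).card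
            * Fintype.card F ^ r X' = Fintype.card F ^ k := by
        intro p' hp'
        obtain ⟨hp'm, hp'r⟩ := Finset.mem_filter.mp hp'
        obtain ⟨w₀, hw₀, rfl⟩ := Finset.mem_image.mp hp'm
        have hset : (agreeOn C X c).filter
              (fun w => (fun i : {i // i ∈ X'} => w i.1) = (fun i => w₀ i.1))
            = agreeOn C X' w₀ := by
          ext u
          simp only [agreeOn, Finset.mem_filter]
          constructor
          · rintro ⟨⟨huC, _⟩, heq⟩
            exact ⟨huC, fun j hj => congrFun heq ⟨j, hj⟩⟩
          · rintro ⟨huC, hua⟩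
            refine ⟨⟨huC, fun j hj => ?_⟩, funext fun i => hua i.1 i.2⟩
            have h1 : u j = w₀ j := hua j (Finset.mem_insert_of_mem hj)
            have h2 : w₀ j = c j := congrFun hp'r ⟨j, hj⟩
            exact h1.trans h2
        rw [hset]
        exact IH X' hcompl w₀ hw₀
      have hkey : (agreeOn C X c).card * Fintype.card F ^ r X'
          = ((projC C X').filter (fun p' => res' p' = p_c)).card * Fintype.card F ^ k := by
        rw [hsum2, Finset.sum_mul, Finset.sum_congr rfl hterm, Finset.sum_const, smul_eq_mul]
      -- two cases
      have hcases : r X' = r X ∨ r X' = r X + 1 := by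
        rcases Nat.eq_or_lt_of_le hr1 with h | h
        · exact Or.inl h.symm
        · exact Or.inr (le_antisymm hr2 h)
      rcases hcases with hcase | hcase
      · -- every extension count is 1
        have hsum_eq : ∑ _p ∈ projC C X, 1
            = ∑ p ∈ projC C X, ((projC C X').filter (fun p' => res' p' = p)).card := by
          rw [← hsum1, hr X', hcase, Finset.sum_const, smul_eq_mul, mul_one, hr]
        have hone := (Finset.sum_eq_sum_iff_of_le hB1).mp hsum_eq p_c hpc
        rw [hcase] at hkey
        rw [hkey, ← hone, one_mul]
      · -- every extension count is q
        have hsum_eq : ∑ p ∈ projC C X, ((projC C X').filter (fun p' => res' p' = p)).card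
            = ∑ _p ∈ projC C X, Fintype.card F := by
          rw [← hsum1, hr X', hcase, Finset.sum_const, smul_eq_mul, hr, pow_succ]
        have hq' := (Finset.sum_eq_sum_iff_of_le (fun p _ => hB2 p)).mp hsum_eq p_c hpc
        rw [hcase, pow_succ, ← mul_assoc, hq'] at hkey
        exact Nat.eq_of_mul_eq_mul_right hq (by rw [hkey, mul_comm])

lemma fiber (hF : 1 < Fintype.card F) (hC1 : C.card = Fintype.card F ^ k)
    (hr : ∀ X, (projC C X).card = Fintype.card F ^ r X)
    (X : Finset (Fin n)) {c : Fin n → F} (hc : c ∈ C) :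
    (agreeOn C X c).card * Fintype.card F ^ r X = Fintype.card F ^ k :=
  fiber_aux hF hC1 hr Xᶜ.card X le_rfl c hc

lemma proj_sub (hF : 1 < Fintype.card F) (hC1 : C.card = Fintype.card F ^ k)
    (hr : ∀ X, (projC C X).card = Fintype.card F ^ r X)
    (X Z : Finset (Fin n)) {c : Fin n → F} (hc : c ∈ C) :
    (projC (agreeOn C X c) Z).card * Fintype.card F ^ r X = Fintype.card F ^ r (X ∪ Z) := by
  have hq : 0 < Fintype.card F := lt_trans zero_lt_one hF
  set D := agreeOn C X c with hD
  have hDsub : D ⊆ C := Finset.filter_subset _ _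
  have hmaps : ∀ w ∈ D, (fun i : {i // i ∈ Z} => w i.1) ∈ projC D Z :=
    fun w hw => Finset.mem_image.mpr ⟨w, hw, rfl⟩
  have hsum : D.card = ∑ p ∈ projC D Z,
      (D.filter (fun w => (fun i : {i // i ∈ Z} => w i.1) = p)).card :=
    Finset.card_eq_sum_card_fiberwise hmaps
  have hterm : ∀ p ∈ projC D Z,
      (D.filter (fun w => (fun i : {i // i ∈ Z} => w i.1) = p)).card
        * Fintype.card F ^ r (X ∪ Z) = Fintype.card F ^ k := by
    intro p hp
    obtain ⟨w, hw, rfl⟩ := Finset.mem_image.mp hp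
    have hwC : w ∈ C := hDsub hw
    have hwa : ∀ i ∈ X, w i = c i := (Finset.mem_filter.mp hw).2
    have hset : D.filter (fun u => (fun i : {i // i ∈ Z} => u i.1) = fun i => w i.1)
        = agreeOn C (X ∪ Z) w := by
      ext u
      simp only [hD, agreeOn, Finset.mem_filter]
      constructor
      · rintro ⟨⟨huC, hua⟩, heq⟩
        refine ⟨huC, fun j hj => ?_⟩
        rcases Finset.mem_union.mp hj with hj | hj
        · exact (hua j hj).trans (hwa j hj).symm
        · exact congrFun heq ⟨j, hj⟩
      · rintro ⟨huC, hua⟩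
        exact ⟨⟨huC, fun j hj => (hua j (Finset.mem_union_left _ hj)).trans (hwa j hj)⟩,
          funext fun i => hua i.1 (Finset.mem_union_right _ i.2)⟩
    rw [hset]
    exact fiber hF hC1 hr (X ∪ Z) hwC
  have h1 : D.card * Fintype.card F ^ r (X ∪ Z) = (projC D Z).card * Fintype.card F ^ k := by
    rw [hsum, Finset.sum_mul, Finset.sum_congr rfl hterm, Finset.sum_const, smul_eq_mul]
  have h2 : D.card * Fintype.card F ^ r X = Fintype.card F ^ k := fiber hF hC1 hr X hc
  have h3 : ((projC D Z).card * Fintype.card F ^ r X) * Fintype.card F ^ k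
      = (Fintype.card F ^ r (X ∪ Z)) * Fintype.card F ^ k := by
    calc ((projC D Z).card * Fintype.card F ^ r X) * Fintype.card F ^ k
        = ((projC D Z).card * Fintype.card F ^ k) * Fintype.card F ^ r X := by ring
      _ = (D.card * Fintype.card F ^ r (X ∪ Z)) * Fintype.card F ^ r X := by rw [← h1]
      _ = (D.card * Fintype.card F ^ r X) * Fintype.card F ^ r (X ∪ Z) := by ring
      _ = Fintype.card F ^ k * Fintype.card F ^ r (X ∪ Z) := by rw [h2]
      _ = (Fintype.card F ^ r (X ∪ Z)) * Fintype.card F ^ k := by ring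
  exact Nat.eq_of_mul_eq_mul_right (pow_pos hq k) h3

lemma submod (hF : 1 < Fintype.card F) (hC1 : C.card = Fintype.card F ^ k)
    (hr : ∀ X, (projC C X).card = Fintype.card F ^ r X)
    {ct : Fin n → F} (hct : ct ∈ C) (X Y : Finset (Fin n)) :
    r (X ∪ Y) + r (X ∩ Y) ≤ r X + r Y := by
  have hsub : agreeOn C X ct ⊆ agreeOn C (X ∩ Y) ct := by
    intro w hw
    obtain ⟨hwC, hwa⟩ := Finset.mem_filter.mp hw
    exact Finset.mem_filter.mpr ⟨hwC, fun j hj => hwa j (Finset.mem_of_mem_inter_left hj)⟩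
  have hAB : (projC (agreeOn C X ct) Y).card ≤ (projC (agreeOn C (X ∩ Y) ct) Y).card :=
    Finset.card_le_card (Finset.image_subset_image hsub)
  have h1 := proj_sub hF hC1 hr X Y hct
  have h2 := proj_sub hF hC1 hr (X ∩ Y) Y hct
  rw [Finset.union_eq_right.mpr Finset.inter_subset_right] at h2
  have hineq : Fintype.card F ^ (r (X ∪ Y) + r (X ∩ Y)) ≤ Fintype.card F ^ (r Y + r X) := by
    rw [pow_add, pow_add, ← h1, ← h2]
    calc (projC (agreeOn C X ct) Y).card * Fintype.card F ^ r X * Fintype.card F ^ r (X ∩ Y)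
        ≤ (projC (agreeOn C (X ∩ Y) ct) Y).card * Fintype.card F ^ r X
            * Fintype.card F ^ r (X ∩ Y) :=
          Nat.mul_le_mul_right _ (Nat.mul_le_mul_right _ hAB)
      _ = (projC (agreeOn C (X ∩ Y) ct) Y).card * Fintype.card F ^ r (X ∩ Y)
            * Fintype.card F ^ r X := by ring
  have := (Nat.pow_le_pow_iff_right hF).mp hineq
  omega

lemma circuit_step (hF : 1 < Fintype.card F) (hC1 : C.card = Fintype.card F ^ k)
    (hr : ∀ X, (projC C X).card = Fintype.card F ^ r X)
    {ct c : Fin n → F} (hct : ct ∈ C) (hc : c ∈ C)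
    {e : Fin n} (he : e ∈ Finset.univ.filter (fun i => c i ≠ ct i)) :
    r (insert e (Finset.univ.filter (fun i => c i ≠ ct i))ᶜ)
      = r (Finset.univ.filter (fun i => c i ≠ ct i))ᶜ + 1 := by
  have hq : 0 < Fintype.card F := lt_trans zero_lt_one hF
  set X := (Finset.univ.filter (fun i => c i ≠ ct i))ᶜ with hXdef
  have hme : c e ≠ ct e := (Finset.mem_filter.mp he).2
  have h1 : r X ≤ r (insert e X) := r_mono hF hr (Finset.subset_insert e X)
  have h2 : r (insert e X) ≤ r X + 1 := r_step hF hr e X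
  by_contra hne
  have heq : r (insert e X) = r X := by omega
  have f1 := fiber hF hC1 hr X hct
  have f2 := fiber hF hC1 hr (insert e X) hct
  rw [heq] at f2
  have hcards : (agreeOn C (insert e X) ct).card = (agreeOn C X ct).card :=
    Nat.eq_of_mul_eq_mul_right (pow_pos hq _) (f2.trans f1.symm)
  have hsub : agreeOn C (insert e X) ct ⊆ agreeOn C X ct := by
    intro w hw
    obtain ⟨hwC, hwa⟩ := Finset.mem_filter.mp hw
    exact Finset.mem_filter.mpr ⟨hwC, fun j hj => hwa j (Finset.mem_insert_of_mem hj)⟩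
  have hseteq : agreeOn C (insert e X) ct = agreeOn C X ct :=
    Finset.eq_of_subset_of_card_le hsub (le_of_eq hcards.symm)
  have hcX : c ∈ agreeOn C X ct := by
    refine Finset.mem_filter.mpr ⟨hc, fun j hj => ?_⟩
    have hjs : j ∉ Finset.univ.filter (fun i => c i ≠ ct i) := Finset.mem_compl.mp hj
    by_contra hne'
    exact hjs (Finset.mem_filter.mpr ⟨Finset.mem_univ j, hne'⟩)
  rw [← hseteq] at hcX
  exact hme ((Finset.mem_filter.mp hcX).2 e (Finset.mem_insert_self e X))

end AAC

namespace AAC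

variable {F : Type*} [Fintype F] [DecidableEq F] {n k : ℕ}
variable {C : Finset (Fin n → F)} {r : Finset (Fin n) → ℕ}

lemma ivt (hF : 1 < Fintype.card F) (hC1 : C.card = Fintype.card F ^ k)
    (hr : ∀ X, (projC C X).card = Fintype.card F ^ r X) (i : ℕ) (hi1 : 1 ≤ i) :
    ∀ (m : ℕ) (W : Finset (Fin n)), W.card ≤ m → r Wᶜ + i ≤ k →
      ∃ W' ⊆ W, r W'ᶜ + i = k := by
  intro m
  induction m with
  | zero =>
    intro W hW hrW
    have hWe : W = ∅ := Finset.card_eq_zero.mp (Nat.le_zero.mp hW)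
    subst hWe
    rw [Finset.compl_empty, r_univ hF hC1 hr] at hrW
    exact absurd hrW (by omega)
  | succ m IH =>
    intro W hW hrW
    rcases Nat.eq_or_lt_of_le hrW with heq | hlt
    · exact ⟨W, Finset.Subset.refl W, heq⟩
    · have hWne : W ≠ ∅ := by
        rintro rfl
        rw [Finset.compl_empty, r_univ hF hC1 hr] at hlt
        omega
      obtain ⟨e, he⟩ := Finset.nonempty_iff_ne_empty.mpr hWne
      have hstep : r ((W.erase e)ᶜ) ≤ r Wᶜ + 1 := by
        rw [Finset.compl_erase]
        exact r_step hF hr e Wᶜ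
      have hcard : (W.erase e).card ≤ m := by
        have := Finset.card_erase_of_mem he
        have h0 : 0 < W.card := Finset.card_pos.mpr ⟨e, he⟩
        omega
      obtain ⟨W', hW's, hW'e⟩ := IH (W.erase e) hcard (by omega)
      exact ⟨W', hW's.trans (Finset.erase_subset e W), hW'e⟩

end AAC

/-- let `C` be an almost affine code of dimension `k`, `ct ∈ C`, and
`c_1,…,c_i` `ct`-minimal non-redundant codewords with
`|⋃_j Supp(c_j, ct)| = d_i(C)`, where `d_i(C) = min{|X| : k - r(E∖X) = i}`.  Then
there is an almost affine subcode `D ⊆ C` of dimension `i` containing `ct` and all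
the `c_j`, with `|Supp(D)| = d_i(C)`. -/
theorem exists_subcode_through_minimal_nonredundant
    {F : Type*} [Fintype F] [DecidableEq F] (hF : 1 < Fintype.card F)
    {n k : ℕ} (C : Finset (Fin n → F)) (hC : IsAlmostAffineCode n k C)
    (r : Finset (Fin n) → ℕ)
    (hr : ∀ X : Finset (Fin n), (projC C X).card = Fintype.card F ^ r X)
    (ct : Fin n → F) (hct : ct ∈ C)
    (i : ℕ) (hi1 : 1 ≤ i) (hik : i ≤ k)
    (cs : Fin i → (Fin n → F))
    (hmin : ∀ j, IsMinimalWord C ct (cs j))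
    (hnonred : ∀ j : Fin i,
      ¬ suppW (cs j) ct ⊆ (Finset.univ.erase j).biUnion (fun l => suppW (cs l) ct))
    (hcard : (Finset.univ.biUnion fun j => suppW (cs j) ct).card
      = sInf {m : ℕ | ∃ X : Finset (Fin n), X.card = m ∧ r Xᶜ + i = k}) :
    ∃ D : Finset (Fin n → F), D ⊆ C ∧ IsAlmostAffineCode n i D ∧ ct ∈ D ∧
      (∀ j, cs j ∈ D) ∧
      (suppCode D ct).card
        = sInf {m : ℕ | ∃ X : Finset (Fin n), X.card = m ∧ r Xᶜ + i = k} := by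
  obtain ⟨hC1, _⟩ := hC
  have hq : 0 < Fintype.card F := lt_trans zero_lt_one hF
  set Y := Finset.univ.biUnion (fun j => suppW (cs j) ct) with hYdef
  -- lower bound: r Yᶜ + i ≤ k
  have hLB : ∀ T : Finset (Fin i), r ((T.biUnion fun l => suppW (cs l) ct)ᶜ) + T.card ≤ k := by
    intro T
    induction T using Finset.induction_on with
    | empty =>
      rw [Finset.biUnion_empty, Finset.compl_empty, Finset.card_empty, add_zero,
        AAC.r_univ hF hC1 hr]
    | @insert j T hj IH =>
      have hTsub : (T.biUnion fun l => suppW (cs l) ct)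
          ⊆ (Finset.univ.erase j).biUnion (fun l => suppW (cs l) ct) := by
        apply Finset.biUnion_subset_biUnion_of_subset_left
        intro l hl
        exact Finset.mem_erase.mpr ⟨fun heq => hj (heq ▸ hl), Finset.mem_univ l⟩
      obtain ⟨e, heS, heA⟩ : ∃ e ∈ suppW (cs j) ct, e ∉ T.biUnion fun l => suppW (cs l) ct := by
        by_contra h
        push_neg at h
        exact hnonred j (fun x hx => hTsub (h x hx))
      set S := suppW (cs j) ct with hSdef
      set A := T.biUnion fun l => suppW (cs l) ct with hAdef
      have hCS : r (insert e Sᶜ) = r Sᶜ + 1 :=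
        AAC.circuit_step hF hC1 hr hct (hmin j).1 heS
      have hPQu : (A ∪ S.erase e)ᶜ ∪ Sᶜ = (S.erase e)ᶜ := by
        rw [← Finset.compl_inter]
        congr 1
        ext x
        simp only [Finset.mem_inter, Finset.mem_union, Finset.mem_erase]
        constructor
        · rintro ⟨hx1 | hx2, hxS⟩
          · exact ⟨fun hxe => heA (hxe ▸ hx1), hxS⟩
          · exact hx2
        · intro hx
          exact ⟨Or.inr hx, hx.2⟩
      have hPQi : (A ∪ S.erase e)ᶜ ∩ Sᶜ = (A ∪ S)ᶜ := by
        rw [← Finset.compl_union]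
        congr 1
        ext x
        simp only [Finset.mem_union, Finset.mem_erase]
        tauto
      have hsm := AAC.submod hF hC1 hr hct ((A ∪ S.erase e)ᶜ) (Sᶜ)
      rw [hPQu, hPQi, Finset.compl_erase, hCS] at hsm
      have hmon : r ((A ∪ S.erase e)ᶜ) ≤ r (Aᶜ) :=
        AAC.r_mono hF hr (Finset.compl_subset_compl.mpr Finset.subset_union_left)
      rw [Finset.biUnion_insert, ← hSdef, ← hAdef,
        Finset.card_insert_of_notMem hj, Finset.union_comm S A]
      omega
  have hLBY : r Yᶜ + i ≤ k := by
    have := hLB Finset.univ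
    rwa [Finset.card_univ, Fintype.card_fin, ← hYdef] at this
  -- upper bound, via minimality of |Y|
  have hUB : r Yᶜ + i = k := by
    rcases Nat.eq_or_lt_of_le hLBY with h | h
    · exact h
    · exfalso
      have hYne : Y.Nonempty := by
        obtain ⟨m, hm⟩ := Function.ne_iff.mp (hmin ⟨0, hi1⟩).2.1
        exact ⟨m, by
          rw [hYdef]
          exact Finset.mem_biUnion.mpr ⟨⟨0, hi1⟩, Finset.mem_univ _,
            Finset.mem_filter.mpr ⟨Finset.mem_univ m, hm⟩⟩⟩
      obtain ⟨e, he⟩ := hYne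
      have hstep : r ((Y.erase e)ᶜ) + i ≤ k := by
        rw [Finset.compl_erase]
        have := AAC.r_step hF hr e Yᶜ
        omega
      obtain ⟨W', hW's, hW'e⟩ :=
        AAC.ivt hF hC1 hr i hi1 (Y.erase e).card (Y.erase e) le_rfl hstep
      have hinf : sInf {m : ℕ | ∃ X : Finset (Fin n), X.card = m ∧ r Xᶜ + i = k} ≤ W'.card :=
        Nat.sInf_le ⟨W', rfl, hW'e⟩
      have hW'c : W'.card ≤ (Y.erase e).card := Finset.card_le_card hW's
      have hYe : (Y.erase e).card = Y.card - 1 := Finset.card_erase_of_mem he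
      have hYpos : 0 < Y.card := Finset.card_pos.mpr ⟨e, he⟩
      omega
  -- the subcode
  have hcsD : ∀ j, cs j ∈ agreeOn C Yᶜ ct := by
    intro j
    refine Finset.mem_filter.mpr ⟨(hmin j).1, fun m hm => ?_⟩
    have hmY := Finset.mem_compl.mp hm
    by_contra hne
    exact hmY (by
      rw [hYdef]
      exact Finset.mem_biUnion.mpr ⟨j, Finset.mem_univ j,
        Finset.mem_filter.mpr ⟨Finset.mem_univ m, hne⟩⟩)
  refine ⟨agreeOn C Yᶜ ct, Finset.filter_subset _ _, ⟨?_, ?_⟩,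
    Finset.mem_filter.mpr ⟨hct, fun _ _ => rfl⟩, hcsD, ?_⟩
  · -- cardinality
    have hf := AAC.fiber hF hC1 hr Yᶜ hct
    have hpow : Fintype.card F ^ k = Fintype.card F ^ i * Fintype.card F ^ r Yᶜ := by
      rw [← pow_add]
      congr 1
      omega
    rw [hpow] at hf
    exact Nat.eq_of_mul_eq_mul_right (pow_pos hq _) hf
  · -- projections are powers
    intro Z
    refine ⟨r (Yᶜ ∪ Z) - r Yᶜ, ?_⟩
    have hp := AAC.proj_sub hF hC1 hr Yᶜ Z hct
    have hmono : r Yᶜ ≤ r (Yᶜ ∪ Z) := AAC.r_mono hF hr Finset.subset_union_left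
    have hpow : Fintype.card F ^ r (Yᶜ ∪ Z)
        = Fintype.card F ^ (r (Yᶜ ∪ Z) - r Yᶜ) * Fintype.card F ^ r Yᶜ := by
      rw [← pow_add]
      congr 1
      omega
    rw [hpow] at hp
    exact Nat.eq_of_mul_eq_mul_right (pow_pos hq _) hp
  · -- support cardinality
    have hSC : suppCode (agreeOn C Yᶜ ct) ct = Y := by
      ext m
      simp only [suppCode, Finset.mem_biUnion]
      constructor
      · rintro ⟨w, hw, hmw⟩
        obtain ⟨hwC, hwa⟩ := Finset.mem_filter.mp hw
        have hne : w m ≠ ct m := (Finset.mem_filter.mp hmw).2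
        by_contra hmY
        exact hne (hwa m (Finset.mem_compl.mpr hmY))
      · intro hm
        rw [hYdef] at hm
        obtain ⟨j, _, hj⟩ := Finset.mem_biUnion.mp hm
        exact ⟨cs j, hcsD j, hj⟩
    rw [hSC, hYdef]
    exact hcard
end
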